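/- Let S = {±e_0,...,±e_{f-1}} ⊂ Z^f. Suppose J, J' ⊆ S satisfy: k_i(J') ≥ k_i(J) for all i with Σ_i k_i(J') = Σ_i k_i(J) + 1 (where k_i(J) = #(J ∩ {±e_{i-1}})), and ω_{J'} - ω_J = ±e_j for some j. Then J ⊂ J' and #(J' \ J) = 1. -/

import Mathlib

/-!
On each coordinate `l`, `J` and `J'` meet `{±e_l}` in subsets of a two-element set: `k_{l+1}`
compares their sizes and `ω_l` their signed sizes. If the second is at least as large as the first
and the signed sizes differ by at most one, it contains the first, since trading `+e_l` for `-e_l`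
moves `ω_l` by two. Hence `J ⊆ J'`, and `#(J' \ J) = #J' - #J = Σ k(J') - Σ k(J) = 1`.
-/

namespace SignedSubsets7

variable (f : ℕ) [NeZero f]

/-- A subset `J ⊆ S = {±e_0,…,±e_{f-1}}` is modelled as a `Finset (Fin f × Bool)`,
`(l, true) ↦ +e_l`, `(l, false) ↦ -e_l`.  `ω_J ∈ ℤ^f` is the signed sum of `J`. -/
def omegaJ (J : Finset (Fin f × Bool)) : Fin f → ℤ := fun i =>
  ∑ x ∈ J, if x.1 = i then (if x.2 then 1 else -1) else 0

/-- `k_i(J) = #(J ∩ {±e_{i-1}}) ∈ {0,1,2}`. -/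
def kvec (J : Finset (Fin f × Bool)) : Fin f → ℕ := fun i =>
  (J.filter fun x => x.1 = i - 1).card

open Finset

theorem card_filter_fst_eq {α : Type*} [DecidableEq α] (J : Finset (α × Bool)) (l : α) :
    #{x ∈ J | x.1 = l} = (if (l, true) ∈ J then 1 else 0) + (if (l, false) ∈ J then 1 else 0) := by
  have hfiber : ∀ x : α × Bool, (if x.1 = l then 1 else 0)
      = (if x = (l, true) then 1 else 0) + (if x = (l, false) then 1 else 0) := by
    rintro ⟨m, _ | _⟩ <;> by_cases hm : m = l <;> simp [hm]
  rw [card_filter, sum_congr rfl fun x _ => hfiber x, sum_add_distrib, sum_ite_eq', sum_ite_eq']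

omit [NeZero f] in
theorem omegaJ_apply (J : Finset (Fin f × Bool)) (l : Fin f) :
    omegaJ f J l = (if (l, true) ∈ J then 1 else 0) - (if (l, false) ∈ J then 1 else 0) := by
  have hfiber : ∀ x : Fin f × Bool, (if x.1 = l then (if x.2 then (1 : ℤ) else -1) else 0)
      = (if x = (l, true) then 1 else 0) - (if x = (l, false) then 1 else 0) := by
    rintro ⟨m, _ | _⟩ <;> by_cases hm : m = l <;> simp [hm]
  rw [omegaJ, sum_congr rfl fun x _ => hfiber x, sum_sub_distrib, sum_ite_eq', sum_ite_eq']

theorem kvec_add_one (J : Finset (Fin f × Bool)) (l : Fin f) :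
    kvec f J (l + 1) = #{x ∈ J | x.1 = l} := by
  simp only [kvec, add_sub_cancel_right]

theorem sum_kvec (J : Finset (Fin f × Bool)) : ∑ i, kvec f J i = #J := by
  rw [← Equiv.sum_comp (Equiv.addRight (1 : Fin f))]
  simp only [Equiv.coe_addRight, kvec_add_one]
  exact (card_eq_sum_card_fiberwise fun x _ => mem_univ x.1).symm

theorem subset_of_kvec_le_of_abs_omegaJ_sub_le {J J' : Finset (Fin f × Bool)}
    (hk : ∀ i, kvec f J i ≤ kvec f J' i) (hω : ∀ i, |omegaJ f J' i - omegaJ f J i| ≤ 1) :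
    J ⊆ J' := by
  rintro ⟨l, b⟩ hb
  have hkl := hk (l + 1)
  have hωl := abs_le.mp (hω l)
  rw [kvec_add_one, kvec_add_one, card_filter_fst_eq, card_filter_fst_eq] at hkl
  rw [omegaJ_apply, omegaJ_apply] at hωl
  cases b <;> split_ifs at hkl hωl <;> omega

theorem subset_of_kvec_and_omega
    (J J' : Finset (Fin f × Bool))
    (h1 : ∀ i, kvec f J i ≤ kvec f J' i)
    (h2 : ∑ i, kvec f J' i = (∑ i, kvec f J i) + 1)
    (h3 : ∃ (j : Fin f) (s : ℤ), (s = 1 ∨ s = -1) ∧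
      ∀ i, omegaJ f J' i - omegaJ f J i = if i = j then s else 0) :
    J ⊆ J' ∧ (J' \ J).card = 1 := by
  obtain ⟨j, s, hs, hd⟩ := h3
  have hω : ∀ i, |omegaJ f J' i - omegaJ f J i| ≤ 1 := fun i => by
    rw [hd i]
    split_ifs
    · rcases hs with rfl | rfl <;> norm_num
    · norm_num
  have hsub := subset_of_kvec_le_of_abs_omegaJ_sub_le f h1 hω
  rw [sum_kvec, sum_kvec] at h2
  exact ⟨hsub, by rw [card_sdiff_of_subset hsub]; omega⟩

end SignedSubsets7
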